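/- Let d be a positive integer, let a, b : Fin d → ℝ be Boolean vectors (each coordinate equal to 0 or 1), and define plane curves π, σ by π_i = (3i, 1 + 2a_i) and σ_i = (3i, 2 − 2b_i) for 1 ≤ i ≤ d. Then the discrete Fréchet distance satisfies d_F(π, σ) ≤ 1 if and only if ⟨a, b⟩ = 0, where d_F(π, σ) is the infimum over all traversals (i_1, j_1), …, (i_T, j_T) of π and σ of max_{1 ≤ t ≤ T} ‖π_{i_t} − σ_{j_t}‖. -/
import Mathlib


/-- A traversal of two curves of length `d`: a sequence `f 1, …, f T` of index
pairs in `{1,…,d}²` with `f 1 = (1,1)`, `f T = (d,d)`, where at each step the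
first index advances, the second advances, or both advance together. -/
def IsTraversal (d T : ℕ) (f : ℕ → ℕ × ℕ) : Prop :=
  1 ≤ T ∧ f 1 = (1, 1) ∧ f T = (d, d) ∧
  (∀ t, 1 ≤ t → t ≤ T →
    1 ≤ (f t).1 ∧ (f t).1 ≤ d ∧ 1 ≤ (f t).2 ∧ (f t).2 ≤ d) ∧
  (∀ t, 1 ≤ t → t < T →
    f (t + 1) = ((f t).1 + 1, (f t).2) ∨
    f (t + 1) = ((f t).1, (f t).2 + 1) ∨
    f (t + 1) = ((f t).1 + 1, (f t).2 + 1))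

/-- The discrete Fréchet distance between two curves of length `d` (with
vertices `π 1, …, π d` and `σ 1, …, σ d`): the infimum over all traversals of
the maximum distance `‖π (f t).1 - σ (f t).2‖` along the traversal. -/
noncomputable def discreteFrechetDist (d : ℕ)
    (π σ : ℕ → EuclideanSpace ℝ (Fin 2)) : ℝ :=
  sInf { r | ∃ T f, ∃ hT : 1 ≤ T, IsTraversal d T f ∧
    r = (Finset.Icc 1 T).sup' (Finset.nonempty_Icc.mpr hT)
      (fun t => ‖π (f t).1 - σ (f t).2‖) }

lemma norm_pair (x y : EuclideanSpace ℝ (Fin 2)) (p q r s : ℝ)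
    (hx : x = ![p,q]) (hy : y = ![r,s]) :
    ‖x - y‖ = Real.sqrt ((p-r)^2 + (q-s)^2) := by
  rw [EuclideanSpace.norm_eq, Fin.sum_univ_two]
  have h0 : (x - y) 0 = p - r := by rw [PiLp.sub_apply, hx, hy]; simp
  have h1 : (x - y) 1 = q - s := by rw [PiLp.sub_apply, hx, hy]; simp
  rw [h0, h1]; simp [sq_abs]

lemma exists_hit (T k : ℕ) (u : ℕ → ℕ) (hT : 1 ≤ T) (h1 : u 1 = 1) (hk1 : 1 ≤ k)
    (hkT : k ≤ u T)
    (hstep : ∀ t, 1 ≤ t → t < T → u (t+1) = u t ∨ u (t+1) = u t + 1) :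
    ∃ t, 1 ≤ t ∧ t ≤ T ∧ u t = k := by
  by_contra h
  push_neg at h
  have key : ∀ t, 1 ≤ t → t ≤ T → u t < k := by
    intro t
    induction t with
    | zero => omega
    | succ n ih =>
      intro _ hnT
      rcases Nat.eq_zero_or_pos n with rfl | hn
      · have h4 : u (0+1) = 1 := h1
        have := h 1 le_rfl hnT
        omega
      · have hun := ih hn (by omega)
        have h2 := hstep n hn (by omega)
        have h3 := h (n+1) (by omega) hnT
        omega
  have := key T hT le_rfl
  omega

/-- **Embedding orthogonality into the Fréchet distance.**
For Boolean vectors `a, b : Fin d → ℝ` and the plane curves with vertices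
`π i = (3i, 1 + 2 aᵢ)`, `σ i = (3i, 2 - 2 bᵢ)` for `1 ≤ i ≤ d`, the discrete
Fréchet distance satisfies `d_F(π, σ) ≤ 1` iff `⟨a, b⟩ = 0`. -/
theorem frechet_le_one_iff_orthogonal (d : ℕ) (hd : 0 < d) (a b : Fin d → ℝ)
    (ha : ∀ i, a i = 0 ∨ a i = 1) (hb : ∀ i, b i = 0 ∨ b i = 1)
    (π σ : ℕ → EuclideanSpace ℝ (Fin 2))
    (hπ : ∀ (i : ℕ) (h1 : 1 ≤ i) (h2 : i ≤ d),
      π i = ![3 * (i : ℝ), 1 + 2 * a ⟨i - 1, by omega⟩])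
    (hσ : ∀ (i : ℕ) (h1 : 1 ≤ i) (h2 : i ≤ d),
      σ i = ![3 * (i : ℝ), 2 - 2 * b ⟨i - 1, by omega⟩]) :
    discreteFrechetDist d π σ ≤ 1 ↔ (∑ i, a i * b i) = 0 := by

  have key : ∀ (i j : ℕ) (h1 : 1 ≤ i) (h2 : i ≤ d) (h3 : 1 ≤ j) (h4 : j ≤ d),
      ‖π i - σ j‖ = Real.sqrt ((3*(i:ℝ) - 3*j)^2 +
        ((1 + 2 * a ⟨i-1, by omega⟩) - (2 - 2 * b ⟨j-1, by omega⟩))^2) := by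
    intro i j h1 h2 h3 h4
    exact norm_pair _ _ _ _ _ _ (hπ i h1 h2) (hσ j h3 h4)
  -- diagonal traversal
  have diag_trav : IsTraversal d d (fun t => (t, t)) :=
    ⟨hd, rfl, rfl, fun t h1 h2 => ⟨h1, h2, h1, h2⟩,
      fun t _ _ => Or.inr (Or.inr rfl)⟩
  unfold discreteFrechetDist
  set S := { r | ∃ T f, ∃ hT : 1 ≤ T, IsTraversal d T f ∧
    r = (Finset.Icc 1 T).sup' (Finset.nonempty_Icc.mpr hT)
      (fun t => ‖π (f t).1 - σ (f t).2‖) } with hS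
  have hmem : ((Finset.Icc 1 d).sup' (Finset.nonempty_Icc.mpr hd)
      (fun t => ‖π ((fun t => (t,t)) t).1 - σ ((fun t => (t,t)) t).2‖)) ∈ S :=
    ⟨d, fun t => (t, t), hd, diag_trav, rfl⟩
  have hSne : S.Nonempty := ⟨_, hmem⟩
  constructor
  · -- forward
    intro hle
    by_contra hne
    have hex : ∃ i0 : Fin d, a i0 * b i0 ≠ 0 := by
      by_contra h'
      push_neg at h'
      exact hne (Finset.sum_eq_zero fun i _ => h' i)
    obtain ⟨i0, hi0⟩ := hex
    have ha1 : a i0 = 1 := (ha i0).resolve_left (fun h => hi0 (by rw [h]; ring))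
    have hb1 : b i0 = 1 := (hb i0).resolve_left (fun h => hi0 (by rw [h]; ring))
    have lower : ∀ r ∈ S, (3:ℝ) ≤ r := by
      rintro r ⟨T, f, hT, ⟨hT1, hstart, hend, hbound, hstep⟩, rfl⟩
      have hits : ∃ t, 1 ≤ t ∧ t ≤ T ∧ (f t).1 = i0.val + 1 := by
        apply exists_hit T (i0.val + 1) (fun t => (f t).1) hT1
        · rw [hstart]
        · omega
        · rw [hend]; exact i0.isLt
        · intro t h1 h2
          rcases hstep t h1 h2 with h | h | h
          · right; rw [h]
          · left; rw [h]
          · right; rw [h]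
      obtain ⟨t, ht1, ht2, hft⟩ := hits
      refine le_trans ?_ (Finset.le_sup' _ (Finset.mem_Icc.mpr ⟨ht1, ht2⟩))
      obtain ⟨hi1, hi2, hj1, hj2⟩ := hbound t ht1 ht2
      rw [key (f t).1 (f t).2 hi1 hi2 hj1 hj2]
      have hidx : (⟨(f t).1 - 1, by omega⟩ : Fin d) = i0 := Fin.ext (by simp [hft])
      rw [hidx, ha1]
      rcases eq_or_ne (f t).2 (f t).1 with heq | hij
      · have hidx2 : (⟨(f t).2 - 1, by omega⟩ : Fin d) = i0 := Fin.ext (by simp [heq, hft])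
        rw [hidx2, hb1]
        have hcast : ((f t).2 : ℝ) = ((f t).1 : ℝ) := by exact_mod_cast heq
        rw [hcast, show (3*(((f t).1):ℝ) - 3*((f t).1))^2 + ((1 + 2*1) - (2 - 2*1))^2 = 9 by ring]
        rw [show (9:ℝ) = 3^2 by norm_num, Real.sqrt_sq (by norm_num)]
      · have hsq : (9:ℝ) ≤ (3*(((f t).1):ℝ) - 3*((f t).2))^2 := by
          rcases lt_or_gt_of_ne hij with h | h
          · have : ((f t).2:ℝ) + 1 ≤ (f t).1 := by exact_mod_cast h
            nlinarith
          · have : ((f t).1:ℝ) + 1 ≤ (f t).2 := by exact_mod_cast h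
            nlinarith
        refine le_trans ?_ (Real.sqrt_le_sqrt (le_add_of_le_of_nonneg hsq (sq_nonneg _)))
        rw [show (9:ℝ) = 3^2 by norm_num, Real.sqrt_sq (by norm_num)]
    have h3 : (3:ℝ) ≤ sInf S := le_csInf hSne lower
    linarith
  · -- backward
    intro hsum
    have hab0 : ∀ i : Fin d, a i * b i = 0 := by
      intro i
      have hn : ∀ i ∈ Finset.univ, 0 ≤ a i * b i := fun i _ =>
        mul_nonneg (by rcases ha i with h | h <;> rw [h] <;> norm_num)
          (by rcases hb i with h | h <;> rw [h] <;> norm_num)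
      exact (Finset.sum_eq_zero_iff_of_nonneg hn).mp hsum i (Finset.mem_univ i)
    have hbdd : BddBelow S := by
      refine ⟨0, ?_⟩
      rintro r ⟨T, f, hT, ⟨hT1, _, _, _, _⟩, rfl⟩
      exact le_trans (norm_nonneg _)
        (Finset.le_sup' (fun t => ‖π (f t).1 - σ (f t).2‖) (Finset.mem_Icc.mpr ⟨le_rfl, hT1⟩))
    refine le_trans (csInf_le hbdd hmem) ?_
    apply Finset.sup'_le
    intro t ht
    rw [Finset.mem_Icc] at ht
    obtain ⟨ht1, ht2⟩ := ht
    rw [key t t ht1 ht2 ht1 ht2]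
    have h0 := hab0 ⟨t - 1, by omega⟩
    rcases ha ⟨t - 1, by omega⟩ with hA | hA <;> rcases hb ⟨t - 1, by omega⟩ with hB | hB <;>
      rw [hA, hB] <;>
      first
        | (rw [show (3*(t:ℝ) - 3*t)^2 + ((1 + 2*0) - (2 - 2*0))^2 = 1 by ring, Real.sqrt_one])
        | (rw [show (3*(t:ℝ) - 3*t)^2 + ((1 + 2*0) - (2 - 2*1))^2 = 1 by ring, Real.sqrt_one])
        | (rw [show (3*(t:ℝ) - 3*t)^2 + ((1 + 2*1) - (2 - 2*0))^2 = 1 by ring, Real.sqrt_one])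
        | (exfalso; rw [hA, hB] at h0; norm_num at h0)
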